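/- arXiv:2006.16661 — 5 statements merged into one kernel-verified Lean document; each statement's English description precedes it below -/
import Mathlib

section
/- Let S be an ε-InitSOPSF from transition system T(Σ) to T(Σ̂) with associated K∞ function α. Then the relation R = {(z, ẑ) ∈ X × X̂ : S(z, ẑ) ≤ ε} is an ε̂-approximate initial-state opacity-preserving simulation relation from T(Σ) to T(Σ̂), where ε̂ = α⁻¹(ε). That is: (1a) for every z⁰ ∈ X₀ ∩ Xₛ there exists ẑ⁰ ∈ X̂₀ ∩ X̂ₛ with (z⁰, ẑ⁰) ∈ R; (1b) for every ẑ⁰ ∈ X̂₀ \ X̂ₛ there exists z⁰ ∈ X₀ \ Xₛ with (z⁰, ẑ⁰) ∈ R; (2) for all (z, ẑ) ∈ R, ‖H(z) − Ĥ(ẑ)‖ ≤ ε̂; (3) for all (z, ẑ) ∈ R, every transition z⁺ ∈ F(z, u) is matched by some ẑ⁺ ∈ F̂(ẑ, û) with (z⁺, ẑ⁺) ∈ R, and conversely. -/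
open Set

lemma MonotoneOn.le_of_map_le_of_leftInvOn {α αinv : ℝ → ℝ}
    (hα_mono : MonotoneOn α (Ici 0)) (hα0 : α 0 = 0)
    (hαinv_left : LeftInvOn αinv α (Ici 0)) (hαinv_mono : MonotoneOn αinv (Ici 0))
    {r ε : ℝ} (hr : 0 ≤ r) (hε : 0 ≤ ε) (h : α r ≤ ε) : r ≤ αinv ε := by
  have hαr : 0 ≤ α r := hα0 ▸ hα_mono self_mem_Ici hr hr
  calc r = αinv (α r) := (hαinv_left hr).symm
    _ ≤ αinv ε := hαinv_mono hαr hε h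

theorem initSOPSF_gives_InitSOP_relation_general
    {X Xh Y U Uh : Type*} [PseudoMetricSpace Y]
    (X0 Xs : Set X) (Xh0 Xhs : Set Xh)
    (F : X → U → Set X) (Fh : Xh → Uh → Set Xh)
    (H : X → Y) (Hh : Xh → Y)
    (S : X → Xh → ℝ) (ε : ℝ) (hε : 0 ≤ ε)
    (α αinv : ℝ → ℝ)
    (hα_mono : StrictMonoOn α (Set.Ici 0)) (hα0 : α 0 = 0)
    (hαinv_left : ∀ r : ℝ, 0 ≤ r → αinv (α r) = r)
    (hαinv_mono : MonotoneOn αinv (Set.Ici 0))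
    -- S is an ε-InitSOPSF:
    (h1a : ∀ z0 ∈ X0 ∩ Xs, ∃ zh0 ∈ Xh0 ∩ Xhs, S z0 zh0 ≤ ε)
    (h1b : ∀ zh0 ∈ Xh0 \ Xhs, ∃ z0 ∈ X0 \ Xs, S z0 zh0 ≤ ε)
    (h2 : ∀ z zh, α (dist (H z) (Hh zh)) ≤ S z zh)
    (h3a : ∀ z zh, S z zh ≤ ε → ∀ u, ∀ z' ∈ F z u,
      ∃ uh, ∃ zh' ∈ Fh zh uh, S z' zh' ≤ ε)
    (h3b : ∀ z zh, S z zh ≤ ε → ∀ uh, ∀ zh' ∈ Fh zh uh,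
      ∃ u, ∃ z' ∈ F z u, S z' zh' ≤ ε) :
    -- R = {(z,zh) | S z zh ≤ ε} is an (αinv ε)-InitSOP simulation relation:
    (∀ z0 ∈ X0 ∩ Xs, ∃ zh0 ∈ Xh0 ∩ Xhs, (z0, zh0) ∈ {p : X × Xh | S p.1 p.2 ≤ ε}) ∧
    (∀ zh0 ∈ Xh0 \ Xhs, ∃ z0 ∈ X0 \ Xs, (z0, zh0) ∈ {p : X × Xh | S p.1 p.2 ≤ ε}) ∧
    (∀ z zh, (z, zh) ∈ {p : X × Xh | S p.1 p.2 ≤ ε} →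
      dist (H z) (Hh zh) ≤ αinv ε) ∧
    (∀ z zh, (z, zh) ∈ {p : X × Xh | S p.1 p.2 ≤ ε} → ∀ u, ∀ z' ∈ F z u,
      ∃ uh, ∃ zh' ∈ Fh zh uh, (z', zh') ∈ {p : X × Xh | S p.1 p.2 ≤ ε}) ∧
    (∀ z zh, (z, zh) ∈ {p : X × Xh | S p.1 p.2 ≤ ε} → ∀ uh, ∀ zh' ∈ Fh zh uh,
      ∃ u, ∃ z' ∈ F z u, (z', zh') ∈ {p : X × Xh | S p.1 p.2 ≤ ε}) :=
  ⟨h1a, h1b, fun z zh hR => hα_mono.monotoneOn.le_of_map_le_of_leftInvOn hα0 hαinv_left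
    hαinv_mono dist_nonneg hε ((h2 z zh).trans hR), h3a, h3b⟩

/-- An ε-InitSOPSF `S` from `T(Σ)` to `T(Σ̂)` with K∞ function `α`
induces an `ε̂`-approximate initial-state opacity-preserving simulation relation
`R = {(z, zh) | S z zh ≤ ε}` with `ε̂ = α⁻¹ ε`. -/
theorem initSOPSF_gives_InitSOP_relation
    {X Xh Y U Uh : Type*} [PseudoMetricSpace Y]
    (X0 Xs : Set X) (Xh0 Xhs : Set Xh)
    (F : X → U → Set X) (Fh : Xh → Uh → Set Xh)
    (H : X → Y) (Hh : Xh → Y)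
    (S : X → Xh → ℝ) (ε : ℝ) (hε : 0 ≤ ε)
    (α αinv : ℝ → ℝ)
    (hα_mono : StrictMonoOn α (Set.Ici 0)) (hα0 : α 0 = 0)
    (hα_cont : ContinuousOn α (Set.Ici 0))
    (hα_unbdd : ∀ M : ℝ, ∃ r : ℝ, 0 ≤ r ∧ M ≤ α r)
    (hαinv_left : ∀ r : ℝ, 0 ≤ r → αinv (α r) = r)
    (hαinv_mono : MonotoneOn αinv (Set.Ici 0))
    (hS_nonneg : ∀ z zh, 0 ≤ S z zh)
    -- S is an ε-InitSOPSF: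
    (h1a : ∀ z0 ∈ X0 ∩ Xs, ∃ zh0 ∈ Xh0 ∩ Xhs, S z0 zh0 ≤ ε)
    (h1b : ∀ zh0 ∈ Xh0 \ Xhs, ∃ z0 ∈ X0 \ Xs, S z0 zh0 ≤ ε)
    (h2 : ∀ z zh, α (dist (H z) (Hh zh)) ≤ S z zh)
    (h3a : ∀ z zh, S z zh ≤ ε → ∀ u, ∀ z' ∈ F z u,
      ∃ uh, ∃ zh' ∈ Fh zh uh, S z' zh' ≤ ε)
    (h3b : ∀ z zh, S z zh ≤ ε → ∀ uh, ∀ zh' ∈ Fh zh uh,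
      ∃ u, ∃ z' ∈ F z u, S z' zh' ≤ ε) :
    -- R = {(z,zh) | S z zh ≤ ε} is an (αinv ε)-InitSOP simulation relation:
    (∀ z0 ∈ X0 ∩ Xs, ∃ zh0 ∈ Xh0 ∩ Xhs, (z0, zh0) ∈ {p : X × Xh | S p.1 p.2 ≤ ε}) ∧
    (∀ zh0 ∈ Xh0 \ Xhs, ∃ z0 ∈ X0 \ Xs, (z0, zh0) ∈ {p : X × Xh | S p.1 p.2 ≤ ε}) ∧
    (∀ z zh, (z, zh) ∈ {p : X × Xh | S p.1 p.2 ≤ ε} →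
      dist (H z) (Hh zh) ≤ αinv ε) ∧
    (∀ z zh, (z, zh) ∈ {p : X × Xh | S p.1 p.2 ≤ ε} → ∀ u, ∀ z' ∈ F z u,
      ∃ uh, ∃ zh' ∈ Fh zh uh, (z', zh') ∈ {p : X × Xh | S p.1 p.2 ≤ ε}) ∧
    (∀ z zh, (z, zh) ∈ {p : X × Xh | S p.1 p.2 ≤ ε} → ∀ uh, ∀ zh' ∈ Fh zh uh,
      ∃ u, ∃ z' ∈ F z u, (z', zh') ∈ {p : X × Xh | S p.1 p.2 ≤ ε}) :=
  initSOPSF_gives_InitSOP_relation_general X0 Xs Xh0 Xhs F Fh H Hh S ε hε α αinv hα_mono hα0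
    hαinv_left hαinv_mono h1a h1b h2 h3a h3b
end

section
/- Let T(Σ) and T(Σ̂) be transition systems with Ŷ ⊆ Y and let R ⊆ X × X̂ be an ε̂-approximate initial-state opacity-preserving simulation relation from T(Σ) to T(Σ̂), with ε̂ ≤ δ/2. If T(Σ̂) is (δ − 2ε̂)-approximate initial-state opaque, then T(Σ) is δ-approximate initial-state opaque. -/
/-!
A secret run of `T(Σ)` lifts, through the forward half of the simulation, to a secret run of
`T(Σ̂)` whose outputs stay `ε̂`-close. Opacity of `T(Σ̂)` gives a non-secret run within
`δ - 2ε̂` of it, which lifts back, through the backward half, to a non-secret run of `T(Σ)`.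
The triangle inequality spends `ε̂` at each end, so the two runs of `T(Σ)` are `δ`-close.
-/

/-- `δ`-approximate initial-state opacity of a transition system with state set `X`,
initial states `X0`, secret states `Xs`, inputs `U`, transition map `F`
and output map `H` into a metric output space. -/
def ApproxInitStateOpaque {X U Y : Type*} [PseudoMetricSpace Y]
    (X0 Xs : Set X) (F : X → U → Set X) (H : X → Y) (δ : ℝ) : Prop :=
  ∀ (n : ℕ) (z : ℕ → X), z 0 ∈ X0 ∩ Xs →
    (∀ k < n, ∃ u, z (k + 1) ∈ F (z k) u) →
    ∃ zb : ℕ → X, zb 0 ∈ X0 \ Xs ∧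
      (∀ k < n, ∃ u, zb (k + 1) ∈ F (zb k) u) ∧
      ∀ k ≤ n, dist (H (z k)) (H (zb k)) ≤ δ

def IsRun {X U : Type*} (F : X → U → Set X) (n : ℕ) (z : ℕ → X) : Prop :=
  ∀ k < n, ∃ u, z (k + 1) ∈ F (z k) u

theorem IsRun.of_succ {X U : Type*} {F : X → U → Set X} {n : ℕ} {z : ℕ → X}
    (hz : IsRun F (n + 1) z) : IsRun F n z :=
  fun k hk => hz k (hk.trans n.lt_succ_self)

theorem IsRun.exists_related {A B UA UB : Type*} {FA : A → UA → Set A} {FB : B → UB → Set B}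
    {S : A → B → Prop}
    (hstep : ∀ a b, S a b → ∀ u, ∀ a' ∈ FA a u, ∃ ub, ∃ b' ∈ FB b ub, S a' b')
    {n : ℕ} {a : ℕ → A} (ha : IsRun FA n a) {b₀ : B} (h₀ : S (a 0) b₀) :
    ∃ b : ℕ → B, b 0 = b₀ ∧ IsRun FB n b ∧ ∀ k ≤ n, S (a k) (b k) := by
  induction n with
  | zero => exact ⟨fun _ => b₀, rfl, fun k hk => absurd hk k.not_lt_zero,
      fun k hk => by rwa [Nat.le_zero.mp hk]⟩
  | succ n ih =>
    obtain ⟨b, hb₀, hb, hS⟩ := ih ha.of_succ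
    obtain ⟨u, hu⟩ := ha n n.lt_succ_self
    obtain ⟨ub, b', hb', hS'⟩ := hstep _ _ (hS n le_rfl) u _ hu
    refine ⟨fun k => if k ≤ n then b k else b', by simp [hb₀], fun k hk => ?_, fun k hk => ?_⟩
    · rcases Nat.lt_succ_iff_lt_or_eq.mp hk with hk | rfl
      · obtain ⟨w, hw⟩ := hb k hk
        exact ⟨w, by simpa [hk.le, Nat.succ_le_of_lt hk] using hw⟩
      · exact ⟨ub, by simpa using hb'⟩
    · rcases Nat.le_succ_iff_eq_or_le.mp hk with rfl | hk
      · simpa using hS'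
      · simpa [hk] using hS k hk

theorem opacity_preserved_by_InitSOP_relation_general
    {X Xh U Uh Y : Type*} [PseudoMetricSpace Y]
    (X0 Xs : Set X) (Xh0 Xhs : Set Xh)
    (F : X → U → Set X) (Fh : Xh → Uh → Set Xh)
    (H : X → Y) (Hh : Xh → Y)
    (R : Set (X × Xh)) (εh δ : ℝ)
    -- R is an εh-InitSOP simulation relation:
    (h1a : ∀ z0 ∈ X0 ∩ Xs, ∃ zh0 ∈ Xh0 ∩ Xhs, (z0, zh0) ∈ R)
    (h1b : ∀ zh0 ∈ Xh0 \ Xhs, ∃ z0 ∈ X0 \ Xs, (z0, zh0) ∈ R)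
    (h2 : ∀ z zh, (z, zh) ∈ R → dist (H z) (Hh zh) ≤ εh)
    (h3a : ∀ z zh, (z, zh) ∈ R → ∀ u, ∀ z' ∈ F z u,
      ∃ uh, ∃ zh' ∈ Fh zh uh, (z', zh') ∈ R)
    (h3b : ∀ z zh, (z, zh) ∈ R → ∀ uh, ∀ zh' ∈ Fh zh uh,
      ∃ u, ∃ z' ∈ F z u, (z', zh') ∈ R)
    (habs : ApproxInitStateOpaque Xh0 Xhs Fh Hh (δ - 2 * εh)) :
    ApproxInitStateOpaque X0 Xs F H δ := by
  intro n z hz₀ hz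
  obtain ⟨zh₀, hzh₀, hR₀⟩ := h1a (z 0) hz₀
  obtain ⟨zh, rfl, hzh, hR⟩ := IsRun.exists_related h3a hz hR₀
  obtain ⟨wh, hwh₀, hwh, hclose⟩ := habs n zh hzh₀ hzh
  obtain ⟨w₀, hw₀, hRw₀⟩ := h1b (wh 0) hwh₀
  obtain ⟨w, rfl, hw, hRw⟩ := IsRun.exists_related (S := fun b a => (a, b) ∈ R)
    (fun b a hS => h3b a b hS) hwh hRw₀
  refine ⟨w, hw₀, hw, fun k hk => ?_⟩
  calc dist (H (z k)) (H (w k))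
      ≤ dist (H (z k)) (Hh (zh k)) + dist (Hh (zh k)) (Hh (wh k))
          + dist (H (w k)) (Hh (wh k)) := by
        rw [dist_comm (H (w k))]
        exact dist_triangle4 _ _ _ _
    _ ≤ εh + (δ - 2 * εh) + εh :=
        add_le_add (add_le_add (h2 _ _ (hR k hk)) (hclose k hk)) (h2 _ _ (hRw k hk))
    _ = δ := by ring

/-- if `R` is an `ε̂`-approximate initial-state opacity-preserving
simulation relation from `T(Σ)` to `T(Σ̂)` with `ε̂ ≤ δ/2`, and `T(Σ̂)` is
`(δ - 2ε̂)`-approximate initial-state opaque, then `T(Σ)` is `δ`-approximate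
initial-state opaque. -/
theorem opacity_preserved_by_InitSOP_relation
    {X Xh U Uh Y : Type*} [PseudoMetricSpace Y]
    (X0 Xs : Set X) (Xh0 Xhs : Set Xh)
    (F : X → U → Set X) (Fh : Xh → Uh → Set Xh)
    (H : X → Y) (Hh : Xh → Y)
    (R : Set (X × Xh)) (εh δ : ℝ) (hεh : 0 ≤ εh) (hδ : εh ≤ δ / 2)
    -- R is an εh-InitSOP simulation relation:
    (h1a : ∀ z0 ∈ X0 ∩ Xs, ∃ zh0 ∈ Xh0 ∩ Xhs, (z0, zh0) ∈ R)
    (h1b : ∀ zh0 ∈ Xh0 \ Xhs, ∃ z0 ∈ X0 \ Xs, (z0, zh0) ∈ R)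
    (h2 : ∀ z zh, (z, zh) ∈ R → dist (H z) (Hh zh) ≤ εh)
    (h3a : ∀ z zh, (z, zh) ∈ R → ∀ u, ∀ z' ∈ F z u,
      ∃ uh, ∃ zh' ∈ Fh zh uh, (z', zh') ∈ R)
    (h3b : ∀ z zh, (z, zh) ∈ R → ∀ uh, ∀ zh' ∈ Fh zh uh,
      ∃ u, ∃ z' ∈ F z u, (z', zh') ∈ R)
    (habs : ApproxInitStateOpaque Xh0 Xhs Fh Hh (δ - 2 * εh)) :
    ApproxInitStateOpaque X0 Xs F H δ :=
  opacity_preserved_by_InitSOP_relation_general X0 Xs Xh0 Xhs F Fh H Hh R εh δ h1a h1b h2 h3a h3b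
    habs
end

section
/- Dwell-time decay, switching case: with V((x,p,l),(x̂,p,l)) := V_p(x,x̂)·κ_p^{−l/ϵ}, assume V_{p⁺}(x,y) ≤ μ V_p(x,y) for all x,y and all modes p, p⁺ (with μ ≥ 1), and V_p(f_p(x,w), x̂⁺) ≤ κ_p V_p(x,x̂) + ρ_p(‖w−ŵ‖) + γ_p(η). If l = k_d − 1, l⁺ = 0, p⁺ ≠ p, ϵ > 1, and the dwell-time condition k_d ≥ ϵ·ln(μ)/ln(1/κ_p) + 1 holds (equivalently μ·κ_p^{(k_d−1)/ϵ} ≤ 1), then V((x⁺,p⁺,0),(x̂⁺,p⁺,0)) = V_{p⁺}(x⁺, x̂⁺) ≤ κ_p^{(ϵ−1)/ϵ} V((x,p,l),(x̂,p,l)) + κ_p^{−k_d/ϵ}(ρ_p(‖w−ŵ‖) + γ_p(η)), where x⁺ = f_p(x,w). -/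
/-! The dwell-time condition is exactly `μ ≤ κ_p^{-(k_d-1)/ϵ} = κ_p^{-l/ϵ}`. Chaining the mode
comparison `V_{p⁺} ≤ μ V_p` with the one-step decay bound gives
`V_{p⁺}(x⁺,x̂⁺) ≤ κ_p · μ V_p(x,x̂) + μ (ρ_p + γ_p)`; it remains to absorb `μ` into `κ_p^{-l/ϵ}`,
to weaken `κ_p` to `κ_p^{(ϵ-1)/ϵ}` and `κ_p^{-l/ϵ}` to `κ_p^{-k_d/ϵ}`, all because `κ_p < 1`. -/

open Real

theorem le_rpow_neg_div_of_dwell_time {K μ ϵ t : ℝ} (hK0 : 0 < K) (hK1 : K < 1) (hϵ : 0 < ϵ)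
    (hμ : 0 < μ) (h : ϵ * log μ / log (1 / K) ≤ t) : μ ≤ K ^ (-t / ϵ) := by
  have hlog : 0 < log (1 / K) := log_pos (by rw [lt_div_iff₀ hK0]; linarith)
  rw [le_rpow_iff_log_le hμ hK0, div_mul_eq_mul_div, le_div_iff₀ hϵ]
  rw [div_le_iff₀ hlog, one_div, log_inv] at h
  linarith

theorem dwell_time_decay_switch_general
    {X W P : Type*} [NormedAddCommGroup X] [NormedAddCommGroup W]
    (f : P → X → W → X) (V : P → X → X → ℝ) (κ : P → ℝ) (μ ϵ η : ℝ)
    (ρ γ : P → ℝ → ℝ) (l kd : ℕ) (p pplus : P)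
    (hκ0 : ∀ q, 0 < κ q) (hκ1 : ∀ q, κ q < 1) (hϵ : 1 < ϵ) (hμ : 1 ≤ μ)
    (hl : (l : ℝ) = (kd : ℝ) - 1)
    -- dwell-time condition k_d ≥ ϵ·ln(μ)/ln(1/κ_p) + 1:
    (hdwell : (kd : ℝ) ≥ ϵ * Real.log μ / Real.log (1 / κ p) + 1)
    (hV_nonneg : ∀ q x y, V q x y ≥ 0)
    -- V_{p⁺}(x,y) ≤ μ V_p(x,y) for all modes:
    (hmu : ∀ q q' x y, V q x y ≤ μ * V q' x y)
    (hρ_nonneg : ∀ q s, 0 ≤ s → 0 ≤ ρ q s) (hγ_nonneg : ∀ q s, 0 ≤ s → 0 ≤ γ q s)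
    (hη : 0 ≤ η)
    (x xh : X) (w wh : W) (xhplus : X)
    (hstep : V p (f p x w) xhplus ≤ κ p * V p x xh + ρ p ‖w - wh‖ + γ p η) :
    V pplus (f p x w) xhplus ≤
      κ p ^ ((ϵ - 1) / ϵ) * (V p x xh * κ p ^ (-(l : ℝ) / ϵ)) +
        κ p ^ (-(kd : ℝ) / ϵ) * (ρ p ‖w - wh‖ + γ p η) := by
  have hϵ0 : 0 < ϵ := by linarith
  have hμ_le : μ ≤ κ p ^ (-(l : ℝ) / ϵ) :=
    le_rpow_neg_div_of_dwell_time (hκ0 p) (hκ1 p) hϵ0 (by linarith) (by linarith)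
  have hκ_le : κ p ≤ κ p ^ ((ϵ - 1) / ϵ) :=
    self_le_rpow_of_le_one (hκ0 p).le (hκ1 p).le (by rw [div_le_one hϵ0]; linarith)
  have hpow_le : κ p ^ (-(l : ℝ) / ϵ) ≤ κ p ^ (-(kd : ℝ) / ϵ) :=
    rpow_le_rpow_of_exponent_ge (hκ0 p) (hκ1 p).le
      (div_le_div_of_nonneg_right (by linarith) hϵ0.le)
  have hV := hV_nonneg p x xh
  have hR : 0 ≤ ρ p ‖w - wh‖ + γ p η :=
    add_nonneg (hρ_nonneg _ _ (norm_nonneg _)) (hγ_nonneg _ _ hη)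
  calc V pplus (f p x w) xhplus ≤ μ * V p (f p x w) xhplus := hmu _ _ _ _
    _ ≤ μ * (κ p * V p x xh + ρ p ‖w - wh‖ + γ p η) := by gcongr
    _ = κ p * (V p x xh * μ) + μ * (ρ p ‖w - wh‖ + γ p η) := by ring
    _ ≤ _ := by
      gcongr
      · exact rpow_nonneg (hκ0 p).le _
      · exact hμ_le.trans hpow_le

/-- dwell-time decay, switching case. With multiple Lyapunov
functions `V_p` satisfying `V_p ≤ μ V_q` (μ ≥ 1) and the one-step bound
`V_p(f_p(x,w), x̂⁺) ≤ κ_p V_p(x,x̂) + ρ_p(‖w−ŵ‖) + γ_p(η)`, if `l = k_d − 1`,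
a switch occurs to `p⁺ ≠ p` with `l⁺ = 0`, and the dwell time satisfies
`k_d ≥ ϵ·ln μ / ln(1/κ_p) + 1`, then
`V_{p⁺}(x⁺,x̂⁺) ≤ κ_p^{(ϵ−1)/ϵ}·(V_p(x,x̂)·κ_p^{−l/ϵ})
  + κ_p^{−k_d/ϵ}·(ρ_p(‖w−ŵ‖) + γ_p(η))`. -/
theorem dwell_time_decay_switch
    {X W P : Type*} [NormedAddCommGroup X] [NormedAddCommGroup W]
    (f : P → X → W → X) (V : P → X → X → ℝ) (κ : P → ℝ) (μ ϵ η : ℝ)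
    (ρ γ : P → ℝ → ℝ) (l kd : ℕ) (p pplus : P)
    (hκ0 : ∀ q, 0 < κ q) (hκ1 : ∀ q, κ q < 1) (hϵ : 1 < ϵ) (hμ : 1 ≤ μ)
    (hswitch : pplus ≠ p)
    (hl : (l : ℝ) = (kd : ℝ) - 1) (hkd1 : 1 ≤ kd)
    -- dwell-time condition k_d ≥ ϵ·ln(μ)/ln(1/κ_p) + 1:
    (hdwell : (kd : ℝ) ≥ ϵ * Real.log μ / Real.log (1 / κ p) + 1)
    (hV_nonneg : ∀ q x y, V q x y ≥ 0)
    -- V_{p⁺}(x,y) ≤ μ V_p(x,y) for all modes: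
    (hmu : ∀ q q' x y, V q x y ≤ μ * V q' x y)
    (hρ_nonneg : ∀ q s, 0 ≤ s → 0 ≤ ρ q s) (hγ_nonneg : ∀ q s, 0 ≤ s → 0 ≤ γ q s)
    (hη : 0 ≤ η)
    (x xh : X) (w wh : W) (xhplus : X)
    (hstep : V p (f p x w) xhplus ≤ κ p * V p x xh + ρ p ‖w - wh‖ + γ p η) :
    V pplus (f p x w) xhplus ≤
      κ p ^ ((ϵ - 1) / ϵ) * (V p x xh * κ p ^ (-(l : ℝ) / ϵ)) +
        κ p ^ (-(kd : ℝ) / ϵ) * (ρ p ‖w - wh‖ + γ p η) :=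
  dwell_time_decay_switch_general f V κ μ ϵ η ρ γ l kd p pplus hκ0 hκ1 hϵ hμ hl hdwell hV_nonneg hmu
    hρ_nonneg hγ_nonneg hη x xh w wh xhplus hstep
end

section
/- Output-distance bound for the lifted simulation function: suppose the output map h satisfies ‖h(x) − h(y)‖ ≤ ℓ(‖x−y‖) with ℓ ∈ K∞, and α̲_p(‖x−x̂‖) ≤ V_p(x,x̂) with α̲_p ∈ K∞, κ_p ∈ (0,1), ϵ > 1, l ≥ 0. Let α̂ := max_p { ℓ ∘ α̲_p⁻¹ } and α := α̂⁻¹. Then for all (x,p,l) and (x̂,p,l): α(‖h(x) − h(x̂)‖) ≤ V((x,p,l),(x̂,p,l)), where V((x,p,l),(x̂,p,l)) = V_p(x,x̂)·κ_p^{−l/ϵ}. -/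
/-!
Since `κ_p < 1` and `-l/ϵ ≤ 0`, the weight `κ_p^{-l/ϵ}` is at least `1`, so the lifted function
dominates `V_p`. Inverting the lower bound `α̲_p(‖x - x̂‖) ≤ V_p(x, x̂)` and applying the
gain `ℓ` of the output map then bounds `‖h x - h x̂‖` by the `p`-th term of the maximum `α̂`.
-/

open Set

theorem norm_sub_le_of_lowerBound_le {X Y : Type*} [SeminormedAddCommGroup X]
    [SeminormedAddCommGroup Y] {h : X → Y} {ℓ αlo αloinv : ℝ → ℝ} {x y : X} {v s : ℝ}
    (hℓ : MonotoneOn ℓ (Ici 0)) (hLip : ‖h x - h y‖ ≤ ℓ ‖x - y‖)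
    (hlo : αlo ‖x - y‖ ≤ v) (hvs : v ≤ s)
    (hαinv : ∀ r t, 0 ≤ r → αlo r ≤ t → r ≤ αloinv t) (hαinv_mono : Monotone αloinv) :
    ‖h x - h y‖ ≤ ℓ (αloinv s) := by
  have hdist : ‖x - y‖ ≤ αloinv s :=
    (hαinv _ _ (norm_nonneg _) hlo).trans (hαinv_mono hvs)
  exact hLip.trans (hℓ (norm_nonneg _) ((norm_nonneg _).trans hdist) hdist)

theorem output_distance_bound_general
    {X Y P : Type*} [NormedAddCommGroup X] [NormedAddCommGroup Y]
    [Fintype P] [Nonempty P]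
    (h : X → Y) (V : P → X → X → ℝ) (κ : P → ℝ) (αlo αloinv : P → ℝ → ℝ)
    (ℓ : ℝ → ℝ) (ϵ : ℝ)
    (hκ0 : ∀ p, 0 < κ p) (hκ1 : ∀ p, κ p < 1) (hϵ : 1 < ϵ)
    -- ℓ ∈ K∞ (monotone, vanishing at 0):
    (hℓ_mono : StrictMonoOn ℓ (Set.Ici 0))
    -- Lipschitz-type bound on the output map:
    (hLip : ∀ x y, ‖h x - h y‖ ≤ ℓ ‖x - y‖)
    -- lower sandwich bound with inverse αloinv of the K∞ function αlo:
    (hlo : ∀ p x y, αlo p ‖x - y‖ ≤ V p x y)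
    (hV_nonneg : ∀ p x y, 0 ≤ V p x y)
    (hαinv : ∀ p (r s : ℝ), 0 ≤ r → αlo p r ≤ s → r ≤ αloinv p s)
    (hαinv_mono : ∀ p, Monotone (αloinv p)) :
    ∀ (p : P) (l : ℕ) (x xh : X),
      ‖h x - h xh‖ ≤
        Finset.univ.sup' Finset.univ_nonempty (fun q : P =>
          ℓ (αloinv q (V p x xh * κ p ^ (-(l : ℝ) / ϵ)))) := by
  intro p l x xh
  have hweight : 1 ≤ κ p ^ (-(l : ℝ) / ϵ) :=
    Real.one_le_rpow_of_pos_of_le_one_of_nonpos (hκ0 p) (hκ1 p).le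
      (div_nonpos_of_nonpos_of_nonneg (neg_nonpos.mpr l.cast_nonneg) (by linarith))
  calc ‖h x - h xh‖ ≤ ℓ (αloinv p (V p x xh * κ p ^ (-(l : ℝ) / ϵ))) :=
        norm_sub_le_of_lowerBound_le hℓ_mono.monotoneOn (hLip x xh) (hlo p x xh)
          (le_mul_of_one_le_right (hV_nonneg p x xh) hweight) (hαinv p) (hαinv_mono p)
    _ ≤ _ := Finset.le_sup' (fun q => ℓ (αloinv q (V p x xh * κ p ^ (-(l : ℝ) / ϵ))))
        (Finset.mem_univ p)

/-- output-distance bound for the lifted simulation function.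
If `‖h(x) − h(y)‖ ≤ ℓ(‖x−y‖)` with `ℓ ∈ K∞`, `α̲_p(‖x−x̂‖) ≤ V_p(x,x̂)`,
`κ_p ∈ (0,1)`, `ϵ > 1`, then with `α̂ = max_p ℓ ∘ α̲_p⁻¹` and `α = α̂⁻¹` one
has `α(‖h(x) − h(x̂)‖) ≤ V((x,p,l),(x̂,p,l)) = V_p(x,x̂)·κ_p^{−l/ϵ}`, stated
here equivalently in the inverse form
`‖h(x) − h(x̂)‖ ≤ α̂(V_p(x,x̂)·κ_p^{−l/ϵ})`. -/
theorem output_distance_bound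
    {X Y P : Type*} [NormedAddCommGroup X] [NormedAddCommGroup Y]
    [Fintype P] [Nonempty P]
    (h : X → Y) (V : P → X → X → ℝ) (κ : P → ℝ) (αlo αloinv : P → ℝ → ℝ)
    (ℓ : ℝ → ℝ) (ϵ : ℝ)
    (hκ0 : ∀ p, 0 < κ p) (hκ1 : ∀ p, κ p < 1) (hϵ : 1 < ϵ)
    -- ℓ ∈ K∞ (monotone, vanishing at 0):
    (hℓ_mono : StrictMonoOn ℓ (Set.Ici 0)) (hℓ0 : ℓ 0 = 0)
    (hℓ_nonneg : ∀ s, 0 ≤ s → 0 ≤ ℓ s)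
    -- Lipschitz-type bound on the output map:
    (hLip : ∀ x y, ‖h x - h y‖ ≤ ℓ ‖x - y‖)
    -- lower sandwich bound with inverse αloinv of the K∞ function αlo:
    (hlo : ∀ p x y, αlo p ‖x - y‖ ≤ V p x y)
    (hV_nonneg : ∀ p x y, 0 ≤ V p x y)
    (hαinv : ∀ p (r s : ℝ), 0 ≤ r → αlo p r ≤ s → r ≤ αloinv p s)
    (hαinv_mono : ∀ p, Monotone (αloinv p)) :
    ∀ (p : P) (l : ℕ) (x xh : X),
      ‖h x - h xh‖ ≤
        Finset.univ.sup' Finset.univ_nonempty (fun q : P =>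
          ℓ (αloinv q (V p x xh * κ p ^ (-(l : ℝ) / ϵ)))) :=
  output_distance_bound_general h V κ αlo αloinv ℓ ϵ hκ0 hκ1 hϵ hℓ_mono hLip hlo hV_nonneg hαinv
    hαinv_mono
end

section
/- Equivalence of opacity under output-identical abstraction with exactly matching runs: if R ⊆ X × X̂ is a 0-approximate InitSOP simulation relation (i.e., ε̂ = 0, so related states have identical outputs) from T(Σ) to T(Σ̂), and T(Σ̂) is δ-approximate initial-state opaque, then T(Σ) is δ-approximate initial-state opaque for the same δ ≥ 0. -/
theorem IsRun.exists_related_s17 {X Xh U Uh : Type*} {F : X → U → Set X} {Fh : Xh → Uh → Set Xh}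
    {R : X → Xh → Prop}
    (hsim : ∀ z zh, R z zh → ∀ u, ∀ z' ∈ F z u, ∃ uh, ∃ zh' ∈ Fh zh uh, R z' zh')
    {n : ℕ} {z : ℕ → X} (hz : IsRun F n z) {zh0 : Xh} (h0 : R (z 0) zh0) :
    ∃ zh : ℕ → Xh, zh 0 = zh0 ∧ IsRun Fh n zh ∧ ∀ k ≤ n, R (z k) (zh k) := by
  induction n with
  | zero => exact ⟨fun _ => zh0, rfl, fun k hk => absurd hk k.not_lt_zero, fun k hk => by
      rwa [Nat.le_zero.mp hk]⟩
  | succ n ih =>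
    obtain ⟨zh, hzh0, hzh, hR⟩ := ih hz.of_succ
    obtain ⟨u, hu⟩ := hz n n.lt_succ_self
    obtain ⟨uh, zh', hzh', hR'⟩ := hsim _ _ (hR n le_rfl) u _ hu
    have hupd : ∀ k ≤ n, Function.update zh (n + 1) zh' k = zh k := fun k hk =>
      Function.update_of_ne (by omega) _ _
    refine ⟨Function.update zh (n + 1) zh', by rw [hupd 0 n.zero_le, hzh0], ?_, ?_⟩
    · intro k hk
      rw [hupd k (by omega)]
      rcases Nat.lt_succ_iff_lt_or_eq.mp hk with hk | rfl
      · rw [hupd (k + 1) hk]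
        exact hzh k hk
      · exact ⟨uh, by rwa [Function.update_self]⟩
    · intro k hk
      rcases Nat.le_succ_iff.mp hk with hk | rfl
      · rw [hupd k hk]
        exact hR k hk
      · rwa [Function.update_self]

theorem opacity_preserved_by_exact_InitSOP_relation_general
    {X Xh U Uh Y : Type*} [PseudoMetricSpace Y]
    (X0 Xs : Set X) (Xh0 Xhs : Set Xh)
    (F : X → U → Set X) (Fh : Xh → Uh → Set Xh)
    (H : X → Y) (Hh : Xh → Y)
    (R : Set (X × Xh)) (δ : ℝ)
    -- R is a 0-InitSOP simulation relation:
    (h1a : ∀ z0 ∈ X0 ∩ Xs, ∃ zh0 ∈ Xh0 ∩ Xhs, (z0, zh0) ∈ R)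
    (h1b : ∀ zh0 ∈ Xh0 \ Xhs, ∃ z0 ∈ X0 \ Xs, (z0, zh0) ∈ R)
    (h2 : ∀ z zh, (z, zh) ∈ R → H z = Hh zh)
    (h3a : ∀ z zh, (z, zh) ∈ R → ∀ u, ∀ z' ∈ F z u,
      ∃ uh, ∃ zh' ∈ Fh zh uh, (z', zh') ∈ R)
    (h3b : ∀ z zh, (z, zh) ∈ R → ∀ uh, ∀ zh' ∈ Fh zh uh,
      ∃ u, ∃ z' ∈ F z u, (z', zh') ∈ R)
    (habs : ApproxInitStateOpaque Xh0 Xhs Fh Hh δ) :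
    ApproxInitStateOpaque X0 Xs F H δ := by
  intro n z hz0 hz
  obtain ⟨zh0, hzh0, hR0⟩ := h1a _ hz0
  obtain ⟨zh, rfl, hzh, hRz⟩ := IsRun.exists_related_s17 (R := fun z zh => (z, zh) ∈ R) h3a hz hR0
  obtain ⟨zhb, hzhb0, hzhb, hdist⟩ := habs n zh hzh0 hzh
  obtain ⟨zb0, hzb0, hRb0⟩ := h1b _ hzhb0
  obtain ⟨zb, rfl, hzb, hRzb⟩ := IsRun.exists_related_s17 (R := fun zh z => (z, zh) ∈ R)
    (fun zh z h => h3b z zh h) hzhb hRb0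
  refine ⟨zb, hzb0, hzb, fun k hk => ?_⟩
  rw [h2 _ _ (hRz k hk), h2 _ _ (hRzb k hk)]
  exact hdist k hk

/-- if `R` is a `0`-approximate InitSOP simulation relation
(related states have identical outputs) from `T(Σ)` to `T(Σ̂)` and `T(Σ̂)` is
`δ`-approximate initial-state opaque, then so is `T(Σ)`, for the same `δ ≥ 0`. -/
theorem opacity_preserved_by_exact_InitSOP_relation
    {X Xh U Uh Y : Type*} [PseudoMetricSpace Y]
    (X0 Xs : Set X) (Xh0 Xhs : Set Xh)
    (F : X → U → Set X) (Fh : Xh → Uh → Set Xh)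
    (H : X → Y) (Hh : Xh → Y)
    (R : Set (X × Xh)) (δ : ℝ) (hδ : 0 ≤ δ)
    -- R is a 0-InitSOP simulation relation:
    (h1a : ∀ z0 ∈ X0 ∩ Xs, ∃ zh0 ∈ Xh0 ∩ Xhs, (z0, zh0) ∈ R)
    (h1b : ∀ zh0 ∈ Xh0 \ Xhs, ∃ z0 ∈ X0 \ Xs, (z0, zh0) ∈ R)
    (h2 : ∀ z zh, (z, zh) ∈ R → H z = Hh zh)
    (h3a : ∀ z zh, (z, zh) ∈ R → ∀ u, ∀ z' ∈ F z u,
      ∃ uh, ∃ zh' ∈ Fh zh uh, (z', zh') ∈ R)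
    (h3b : ∀ z zh, (z, zh) ∈ R → ∀ uh, ∀ zh' ∈ Fh zh uh,
      ∃ u, ∃ z' ∈ F z u, (z', zh') ∈ R)
    (habs : ApproxInitStateOpaque Xh0 Xhs Fh Hh δ) :
    ApproxInitStateOpaque X0 Xs F H δ :=
  opacity_preserved_by_exact_InitSOP_relation_general X0 Xs Xh0 Xhs F Fh H Hh R δ h1a h1b h2 h3a h3b
    habs
end
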